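/- Let F, G be partial isometries between Hilbert spaces (F*F and G*G are orthogonal projections). If F ≤◇ G in the diamond order (range(F) ⊆ range(G), range(F*) ⊆ range(G*), and FF*F = FG*F), then F ≤* G in the star order: GF* = FF* and F*G = F*F. -/

import Mathlib

open ContinuousLinearMap

namespace ContinuousLinearMap

variable {𝕜 E E' V : Type*} [RCLike 𝕜]
  [NormedAddCommGroup E] [InnerProductSpace 𝕜 E] [CompleteSpace E]
  [NormedAddCommGroup E'] [NormedSpace 𝕜 E']
  [NormedAddCommGroup V] [InnerProductSpace 𝕜 V] [CompleteSpace V]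

theorem adjoint_comp_comp_adjoint_of_comp_adjoint_comp {F : E →L[𝕜] V}
    (hF : F ∘L (adjoint F ∘L F) = F) : adjoint F ∘L (F ∘L adjoint F) = adjoint F := by
  simpa only [adjoint_comp, adjoint_adjoint, comp_assoc] using congrArg adjoint hF

/-- `G ∘L adjoint G` is the orthogonal projection onto the range of a partial isometry `G`. -/
theorem comp_adjoint_comp_of_range_le {G : E →L[𝕜] V} (hG : G ∘L (adjoint G ∘L G) = G)
    {F : E' →L[𝕜] V} (h : LinearMap.range (F : E' →ₗ[𝕜] V) ≤ LinearMap.range (G : E →ₗ[𝕜] V)) :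
    G ∘L (adjoint G ∘L F) = F := by
  ext x
  obtain ⟨y, hy⟩ := h ⟨x, rfl⟩
  change G (adjoint G (F x)) = F x
  replace hy : G y = F x := hy
  rw [← hy]
  exact congrArg (fun A => A y) hG

/-- With `D := adjoint G ∘L F - adjoint F ∘L F`, each of the four terms of `adjoint D ∘L D`
equals `adjoint F ∘L F`, so `adjoint D ∘L D = 0` and hence `D = 0`. -/
theorem adjoint_comp_eq_adjoint_comp_self_of_diamond {F G : E →L[𝕜] V}
    (hF : F ∘L (adjoint F ∘L F) = F) (hG : G ∘L (adjoint G ∘L G) = G)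
    (h_range : LinearMap.range (F : E →ₗ[𝕜] V) ≤ LinearMap.range (G : E →ₗ[𝕜] V))
    (h_diamond : F ∘L (adjoint F ∘L F) = F ∘L (adjoint G ∘L F)) :
    adjoint G ∘L F = adjoint F ∘L F := by
  have hFFGF : adjoint F ∘L (F ∘L (adjoint G ∘L F)) = adjoint F ∘L F := by
    rw [← h_diamond, hF]
  have hFGFF : adjoint F ∘L (G ∘L (adjoint F ∘L F)) = adjoint F ∘L F := by
    simpa only [adjoint_comp, adjoint_adjoint, comp_assoc] using congrArg adjoint hFFGF
  have hFGGF : adjoint F ∘L (G ∘L (adjoint G ∘L F)) = adjoint F ∘L F := by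
    rw [comp_adjoint_comp_of_range_le hG h_range]
  have hFFFF : adjoint F ∘L (F ∘L (adjoint F ∘L F)) = adjoint F ∘L F := by
    rw [hF]
  rw [← sub_eq_zero, ← adjoint_comp_self_eq_zero_iff]
  simp only [map_sub, adjoint_comp, adjoint_adjoint, sub_comp, comp_sub, comp_assoc,
    hFFGF, hFGFF, hFGGF, hFFFF, sub_self]

end ContinuousLinearMap

theorem stmt18 {H K : Type*} [NormedAddCommGroup H] [InnerProductSpace ℂ H] [CompleteSpace H]
    [NormedAddCommGroup K] [InnerProductSpace ℂ K] [CompleteSpace K]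
    (F G : H →L[ℂ] K)
    (hF : F ∘L ((adjoint F) ∘L F) = F) (hG : G ∘L ((adjoint G) ∘L G) = G)
    (h1 : LinearMap.range (F : H →ₗ[ℂ] K) ≤ LinearMap.range (G : H →ₗ[ℂ] K))
    (h3 : F ∘L ((adjoint F) ∘L F) = F ∘L ((adjoint G) ∘L F)) :
    G ∘L (adjoint F) = F ∘L (adjoint F) ∧ (adjoint F) ∘L G = (adjoint F) ∘L F := by
  have hGF : adjoint G ∘L F = adjoint F ∘L F :=
    adjoint_comp_eq_adjoint_comp_self_of_diamond hF hG h1 h3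
  constructor
  · calc G ∘L adjoint F = G ∘L (adjoint F ∘L (F ∘L adjoint F)) := by
          rw [adjoint_comp_comp_adjoint_of_comp_adjoint_comp hF]
      _ = (G ∘L (adjoint G ∘L F)) ∘L adjoint F := by rw [hGF]; rfl
      _ = F ∘L adjoint F := by rw [comp_adjoint_comp_of_range_le hG h1]
  · simpa only [adjoint_comp, adjoint_adjoint] using congrArg adjoint hGF
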